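/- Let φ be an H-equivariant coderivation on a coalgebra C with coflat coaction δ of a Hopf algebra H. Then for every n ≥ 0, Δ_H(φ^{⋆n}(c)) = Σ_{k=0}^{n} (n choose k) φ^{⋆k}(c_{(1)}^{(0)}) ⊗ c_{(1)}^{(1)} φ^{⋆(n−k)}(c_{(2)}) for all c ∈ C. -/

import Mathlib

open TensorProduct LinearMap Coalgebra

/-- A coflat Hopf coaction of a Hopf algebra `H` on a coalgebra `C`. -/
structure IsCoflatCoaction (R C H : Type) [CommRing R]
    [AddCommGroup C] [Module R C] [Coalgebra R C]
    [Ring H] [HopfAlgebra R H]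
    (δ : C →ₗ[R] C ⊗[R] H) : Prop where
  coassoc : (TensorProduct.assoc R C H H).toLinearMap ∘ₗ
      (TensorProduct.map δ (LinearMap.id : H →ₗ[R] H)) ∘ₗ δ
      = (TensorProduct.map (LinearMap.id : C →ₗ[R] C) (Coalgebra.comul (R := R))) ∘ₗ δ
  counitary : (TensorProduct.rid R C).toLinearMap ∘ₗ
      (TensorProduct.map (LinearMap.id : C →ₗ[R] C) (Coalgebra.counit (R := R))) ∘ₗ δ
      = LinearMap.id
  coflat_mul : (TensorProduct.map (LinearMap.id : (C ⊗[R] C) →ₗ[R] C ⊗[R] C)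
        (LinearMap.mul' R H)) ∘ₗ
      (TensorProduct.tensorTensorTensorComm R C H C H).toLinearMap ∘ₗ
      (TensorProduct.map δ δ) ∘ₗ Coalgebra.comul
      = (TensorProduct.map (Coalgebra.comul (R := R)) (LinearMap.id : H →ₗ[R] H)) ∘ₗ δ
  coflat_counit : (LinearMap.mul' R R) ∘ₗ
      (TensorProduct.map (Coalgebra.counit (R := R)) (Coalgebra.counit (R := R))) ∘ₗ δ
      = Coalgebra.counit

section Cocharacters

variable (R C H : Type) [CommRing R] [AddCommGroup C] [Module R C] [Coalgebra R C]
  [Ring H] [HopfAlgebra R H]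

/-- The convolution product on `Hom(C,H)`: `(φ ⋆ ψ)(c) = φ(c₍₁₎) ψ(c₍₂₎)`. -/
noncomputable def conv (φ ψ : C →ₗ[R] H) : C →ₗ[R] H :=
  (LinearMap.mul' R H) ∘ₗ (TensorProduct.map φ ψ) ∘ₗ Coalgebra.comul

/-- The convolution unit `c ↦ ε(c) 1`. -/
noncomputable def convOne : C →ₗ[R] H :=
  (Algebra.linearMap R H) ∘ₗ Coalgebra.counit

variable (δ : C →ₗ[R] C ⊗[R] H)

/-- `c ↦ φ(c₍₁₎⁽⁰⁾) ⊗ c₍₁₎⁽¹⁾ ψ(c₍₂₎)` as a linear map `C → H ⊗ H`. -/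
noncomputable def coactTerm (φ ψ : C →ₗ[R] H) : C →ₗ[R] H ⊗[R] H :=
  (TensorProduct.map (LinearMap.id : H →ₗ[R] H) (LinearMap.mul' R H)) ∘ₗ
    (TensorProduct.assoc R H H H).toLinearMap ∘ₗ
    (TensorProduct.map (TensorProduct.map φ (LinearMap.id : H →ₗ[R] H)) ψ) ∘ₗ
    (TensorProduct.map δ (LinearMap.id : C →ₗ[R] C)) ∘ₗ Coalgebra.comul

/-- `c ↦ c₍₁₎⁽⁰⁾ ⊗ c₍₁₎⁽¹⁾ φ(c₍₂₎)` as a linear map `C → C ⊗ H`. -/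
noncomputable def comodCondLHS (φ : C →ₗ[R] H) : C →ₗ[R] C ⊗[R] H :=
  (TensorProduct.map (LinearMap.id : C →ₗ[R] C) (LinearMap.mul' R H)) ∘ₗ
    (TensorProduct.assoc R C H H).toLinearMap ∘ₗ
    (TensorProduct.map δ φ) ∘ₗ Coalgebra.comul

/-- `c ↦ c₍₂₎⁽⁰⁾ ⊗ φ(c₍₁₎) c₍₂₎⁽¹⁾` as a linear map `C → C ⊗ H`. -/
noncomputable def comodCondRHS (φ : C →ₗ[R] H) : C →ₗ[R] C ⊗[R] H :=
  (TensorProduct.map (LinearMap.id : C →ₗ[R] C) (LinearMap.mul' R H)) ∘ₗ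
    (TensorProduct.assoc R C H H).toLinearMap ∘ₗ
    (TensorProduct.map ((TensorProduct.comm R H C).toLinearMap)
      (LinearMap.id : H →ₗ[R] H)) ∘ₗ
    (TensorProduct.assoc R H C H).symm.toLinearMap ∘ₗ
    (TensorProduct.map φ δ) ∘ₗ Coalgebra.comul

/-- An `H`-equivariant cocharacter: convolution invertible, counitary, satisfying the
coaction condition and the comodule condition. -/
structure IsCocharacter (φ : C →ₗ[R] H) : Prop where
  invertible : ∃ ψ : C →ₗ[R] H, conv R C H φ ψ = convOne R C H ∧ conv R C H ψ φ = convOne R C H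
  counitary : (Coalgebra.counit (R := R)) ∘ₗ φ = Coalgebra.counit
  coaction : (Coalgebra.comul (R := R)) ∘ₗ φ = coactTerm R C H δ φ φ
  comodule : comodCondLHS R C H δ φ = comodCondRHS R C H δ φ

end Cocharacters

section Coderivations

variable (R C H : Type) [CommRing R] [AddCommGroup C] [Module R C] [Coalgebra R C]
  [Ring H] [HopfAlgebra R H]

/-- An `H`-equivariant coderivation: `ε ∘ φ = 0`, the infinitesimal coaction condition
`Δ(φ(c)) = e(c₍₁₎⁽⁰⁾) ⊗ c₍₁₎⁽¹⁾ φ(c₍₂₎) + φ(c₍₁₎⁽⁰⁾) ⊗ c₍₁₎⁽¹⁾ e(c₍₂₎)` (with `e(c) = ε(c)1`),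
and the comodule condition. -/
structure IsCoderivation (δ : C →ₗ[R] C ⊗[R] H) (φ : C →ₗ[R] H) : Prop where
  counit_zero : (Coalgebra.counit (R := R)) ∘ₗ φ = 0
  coaction : (Coalgebra.comul (R := R)) ∘ₗ φ
    = coactTerm R C H δ (convOne R C H) φ + coactTerm R C H δ φ (convOne R C H)
  comodule : comodCondLHS R C H δ φ = comodCondRHS R C H δ φ

/-- `n`-fold convolution power, `φ^{⋆0} = e`. -/
noncomputable def convPow (φ : C →ₗ[R] H) : ℕ → (C →ₗ[R] H)
  | 0 => convOne R C H
  | n + 1 => conv R C H φ (convPow φ n)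

end Coderivations

/-!
In the convolution algebra `Hom(C, H ⊗ H)` the term `coactTerm α β` factors as `P α * Q β`,
where `P α = coactLeft δ α = c ↦ α(c⁽⁰⁾) ⊗ c⁽¹⁾` and `Q β = c ↦ 1 ⊗ β(c)`. Both are ring maps out
of the convolution algebra `Hom(C, H)`: `Q` because `h ↦ 1 ⊗ h` is an algebra map, `P` because the
coaction is coflat (for `P 1 = 1` one needs `ε(c⁽⁰⁾) c⁽¹⁾ = ε(c) 1`, which uses the antipode).
Postcomposition with the algebra map `Δ_H` is also a ring map, the coaction condition says
`Δ_H ∘ φ = P φ + Q φ`, and the comodule condition says that `P φ` and `Q φ` commute. The binomial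
theorem gives
`Δ_H ∘ φ^{⋆n} = ∑ (n choose k) P(φ)^k Q(φ)^(n-k) = ∑ (n choose k) P(φ^{⋆k}) Q(φ^{⋆(n-k)})`.
-/

open WithConv

namespace AlgHom

variable {R A B C : Type*} [CommSemiring R] [Semiring A] [Algebra R A] [Semiring B] [Algebra R B]
  [AddCommMonoid C] [Module R C] [Coalgebra R C]

noncomputable def compConvRingHom (h : A →ₐ[R] B) :
    WithConv (C →ₗ[R] A) →+* WithConv (C →ₗ[R] B) where
  toFun f := toConv (h.toLinearMap ∘ₗ f.ofConv)
  map_one' := by ext; simp [LinearMap.convOne_def]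
  map_mul' f g := WithConv.ext (LinearMap.algHom_comp_convMul_distrib h f g)
  map_zero' := by ext; simp
  map_add' f g := by ext; simp

@[simp]
lemma compConvRingHom_apply (h : A →ₐ[R] B) (f : WithConv (C →ₗ[R] A)) :
    h.compConvRingHom f = toConv (h.toLinearMap ∘ₗ f.ofConv) := rfl

end AlgHom

section Convolution

variable {R C H : Type} [CommRing R] [AddCommGroup C] [Module R C] [Coalgebra R C]
  [Ring H] [HopfAlgebra R H]

lemma toConv_convOne : toConv (convOne R C H) = 1 := rfl

lemma toConv_convPow (φ : C →ₗ[R] H) (n : ℕ) : toConv (convPow R C H φ n) = toConv φ ^ n := by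
  induction n with
  | zero => rfl
  | succ n ih => rw [pow_succ', ← ih]; rfl

end Convolution

section TensorSquare

variable {R C H : Type*} [CommSemiring R] [Semiring H] [Algebra R H]
  [AddCommMonoid C] [Module R C]

lemma mul'_comp_map_rTensor_rTensor (α γ : C →ₗ[R] H) :
    mul' R (H ⊗[R] H) ∘ₗ map (α.rTensor H) (γ.rTensor H)
      = (mul' R H ∘ₗ map α γ).rTensor H ∘ₗ map LinearMap.id (mul' R H) ∘ₗ
          (tensorTensorTensorComm R C H C H).toLinearMap := by
  ext; simp

lemma mul'_comp_map_rTensor_includeRight (α : C →ₗ[R] H) :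
    mul' R (H ⊗[R] H) ∘ₗ
        map (α.rTensor H) (Algebra.TensorProduct.includeRight : H →ₐ[R] H ⊗[R] H).toLinearMap
      = α.rTensor H ∘ₗ map LinearMap.id (mul' R H) ∘ₗ
          (TensorProduct.assoc R C H H).toLinearMap := by
  ext; simp

lemma mul'_comp_map_includeRight_rTensor (α : C →ₗ[R] H) :
    mul' R (H ⊗[R] H) ∘ₗ
        map (Algebra.TensorProduct.includeRight : H →ₐ[R] H ⊗[R] H).toLinearMap (α.rTensor H)
      = α.rTensor H ∘ₗ map LinearMap.id (mul' R H) ∘ₗ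
          (TensorProduct.assoc R C H H).toLinearMap ∘ₗ
          map (TensorProduct.comm R H C).toLinearMap LinearMap.id ∘ₗ
          (TensorProduct.assoc R H C H).symm.toLinearMap := by
  ext; simp

end TensorSquare

section Coaction

variable {R C H : Type} [CommRing R] [AddCommGroup C] [Module R C] [Coalgebra R C]
  [Ring H] [HopfAlgebra R H] (δ : C →ₗ[R] C ⊗[R] H)

noncomputable def coactLeft (α : C →ₗ[R] H) : C →ₗ[R] H ⊗[R] H := α.rTensor H ∘ₗ δ

lemma coactTerm_eq_rTensor_comp_comodCondLHS (α β : C →ₗ[R] H) :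
    coactTerm R C H δ α β = α.rTensor H ∘ₗ comodCondLHS R C H δ β := by
  simp only [coactTerm, comodCondLHS, coassoc_simps]

lemma coactLeft_mul_includeRight (α β : C →ₗ[R] H) :
    toConv (coactLeft δ α) * Algebra.TensorProduct.includeRight.compConvRingHom (toConv β)
      = toConv (α.rTensor H ∘ₗ comodCondLHS R C H δ β) := by
  ext1
  simp only [LinearMap.convMul_def, AlgHom.compConvRingHom_apply, coactLeft, ofConv_toConv,
    TensorProduct.map_comp, ← LinearMap.comp_assoc]
  rw [mul'_comp_map_rTensor_includeRight]
  simp only [comodCondLHS, LinearMap.comp_assoc]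

lemma includeRight_mul_coactLeft (α β : C →ₗ[R] H) :
    Algebra.TensorProduct.includeRight.compConvRingHom (toConv β) * toConv (coactLeft δ α)
      = toConv (α.rTensor H ∘ₗ comodCondRHS R C H δ β) := by
  ext1
  simp only [LinearMap.convMul_def, AlgHom.compConvRingHom_apply, coactLeft, ofConv_toConv,
    TensorProduct.map_comp, ← LinearMap.comp_assoc]
  rw [mul'_comp_map_includeRight_rTensor]
  simp only [comodCondRHS, LinearMap.comp_assoc]

lemma toConv_coactTerm (α β : C →ₗ[R] H) :
    toConv (coactTerm R C H δ α β)
      = toConv (coactLeft δ α) * Algebra.TensorProduct.includeRight.compConvRingHom (toConv β) := by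
  rw [coactLeft_mul_includeRight, coactTerm_eq_rTensor_comp_comodCondLHS]

lemma commute_coactLeft_includeRight {β : C →ₗ[R] H}
    (hβ : comodCondLHS R C H δ β = comodCondRHS R C H δ β) (α : C →ₗ[R] H) :
    Commute (toConv (coactLeft δ α))
      (Algebra.TensorProduct.includeRight.compConvRingHom (toConv β)) := by
  rw [Commute, SemiconjBy, coactLeft_mul_includeRight, includeRight_mul_coactLeft, hβ]

lemma mul'_comp_rTensor_comp_comodCondLHS (g β : C →ₗ[R] H) :
    mul' R H ∘ₗ g.rTensor H ∘ₗ comodCondLHS R C H δ β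
      = conv R C H (mul' R H ∘ₗ g.rTensor H ∘ₗ δ) β := by
  have key : ((mul' R H ∘ₗ g.rTensor H) ∘ₗ map LinearMap.id (mul' R H)) ∘ₗ
        (TensorProduct.assoc R C H H).toLinearMap
      = mul' R H ∘ₗ (mul' R H ∘ₗ g.rTensor H).rTensor H := by
    ext; simp [mul_assoc]
  rw [comodCondLHS, conv, ← LinearMap.comp_assoc δ, ← LinearMap.rTensor_comp_map]
  simp only [← LinearMap.comp_assoc, key]

end Coaction

section CoflatCoaction

variable {R C H : Type} [CommRing R] [AddCommGroup C] [Module R C] [Coalgebra R C]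
  [Ring H] [HopfAlgebra R H] {δ : C →ₗ[R] C ⊗[R] H}

lemma IsCoflatCoaction.coactLeft_conv (hδ : IsCoflatCoaction R C H δ) (α γ : C →ₗ[R] H) :
    toConv (coactLeft δ (conv R C H α γ)) = toConv (coactLeft δ α) * toConv (coactLeft δ γ) := by
  ext1
  calc (conv R C H α γ).rTensor H ∘ₗ δ
      = (mul' R H ∘ₗ map α γ).rTensor H ∘ₗ (map comul LinearMap.id ∘ₗ δ) := by
        rw [conv, ← LinearMap.comp_assoc, LinearMap.rTensor_comp]; rfl
    _ = (mul' R (H ⊗[R] H) ∘ₗ map (α.rTensor H) (γ.rTensor H)) ∘ₗ map δ δ ∘ₗ comul := by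
        rw [← hδ.coflat_mul, mul'_comp_map_rTensor_rTensor]
        simp only [LinearMap.comp_assoc]
    _ = _ := by
        rw [LinearMap.convMul_def, coactLeft, coactLeft, TensorProduct.map_comp]
        simp only [LinearMap.comp_assoc]

variable (δ) in
noncomputable def coactCounit : C →ₗ[R] H :=
  (TensorProduct.lid R H).toLinearMap ∘ₗ (counit (R := R) (A := C)).rTensor H ∘ₗ δ

lemma IsCoflatCoaction.comodCondLHS_coactCounit (hδ : IsCoflatCoaction R C H δ) :
    comodCondLHS R C H δ (coactCounit δ) = δ := by
  have key : map LinearMap.id (mul' R H) ∘ₗ (TensorProduct.assoc R C H H).toLinearMap ∘ₗ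
        ((TensorProduct.lid R H).toLinearMap ∘ₗ counit.rTensor H).lTensor (C ⊗[R] H)
      = ((TensorProduct.rid R C).toLinearMap ∘ₗ counit.lTensor C).rTensor H ∘ₗ
          map LinearMap.id (mul' R H) ∘ₗ
          (tensorTensorTensorComm R C H C H).toLinearMap := by
    ext; simp [TensorProduct.smul_tmul']
  calc comodCondLHS R C H δ (coactCounit δ)
      = ((TensorProduct.rid R C).toLinearMap ∘ₗ counit.lTensor C).rTensor H ∘ₗ
          (map LinearMap.id (mul' R H) ∘ₗ
            (tensorTensorTensorComm R C H C H).toLinearMap ∘ₗ map δ δ ∘ₗ comul) := by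
        rw [comodCondLHS, coactCounit, ← LinearMap.comp_assoc δ, ← LinearMap.lTensor_comp_map]
        simp only [← LinearMap.comp_assoc, key]
    _ = δ := by
        rw [hδ.coflat_mul, ← LinearMap.comp_assoc, LinearMap.rTensor_def, ← TensorProduct.map_comp,
          LinearMap.comp_assoc, Coalgebra.lTensor_counit_comp_comul]
        convert LinearMap.id_comp δ
        ext; simp

lemma IsCoflatCoaction.mul'_comp_rTensor_antipode_coactCounit (hδ : IsCoflatCoaction R C H δ) :
    mul' R H ∘ₗ (HopfAlgebra.antipode R ∘ₗ coactCounit δ).rTensor H ∘ₗ δ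
      = convOne R C H := by
  have hS : mul' R H ∘ₗ
        (HopfAlgebra.antipode R ∘ₗ (TensorProduct.lid R H).toLinearMap ∘ₗ
          counit.rTensor H).rTensor H ∘ₗ (TensorProduct.assoc R C H H).symm.toLinearMap
      = (TensorProduct.lid R H).toLinearMap ∘ₗ
          map counit (mul' R H ∘ₗ (HopfAlgebra.antipode R).rTensor H) := by
    ext; simp
  have hε : (TensorProduct.lid R H).toLinearMap ∘ₗ
        map (counit (R := R) (A := C)) (Algebra.linearMap R H ∘ₗ counit (R := R) (A := H))
      = Algebra.linearMap R H ∘ₗ mul' R R ∘ₗ map (counit (A := C)) (counit (A := H)) := by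
    ext; simp [Algebra.smul_def]
  calc mul' R H ∘ₗ (HopfAlgebra.antipode R ∘ₗ coactCounit δ).rTensor H ∘ₗ δ
      = (mul' R H ∘ₗ (HopfAlgebra.antipode R ∘ₗ (TensorProduct.lid R H).toLinearMap
          ∘ₗ counit.rTensor H).rTensor H ∘ₗ (TensorProduct.assoc R C H H).symm.toLinearMap) ∘ₗ
          (comul (R := R) (A := H)).lTensor C ∘ₗ δ := by
        rw [LinearMap.lTensor_def, ← hδ.coassoc]
        simp only [coassoc_simps, coactCounit]
    _ = (TensorProduct.lid R H).toLinearMap ∘ₗ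
          map counit (Algebra.linearMap R H ∘ₗ counit) ∘ₗ δ := by
        rw [hS, LinearMap.comp_assoc, ← LinearMap.comp_assoc δ, LinearMap.map_comp_lTensor]
        simp only [LinearMap.comp_assoc, HopfAlgebra.mul_antipode_rTensor_comul]
    _ = convOne R C H := by
        rw [← LinearMap.comp_assoc, hε, LinearMap.comp_assoc, LinearMap.comp_assoc,
          hδ.coflat_counit]
        rfl

lemma IsCoflatCoaction.coactCounit_eq (hδ : IsCoflatCoaction R C H δ) :
    coactCounit δ = convOne R C H := by
  calc coactCounit δ = conv R C H (convOne R C H) (coactCounit δ) :=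
        congrArg ofConv (one_mul (toConv (coactCounit δ))).symm
    _ = conv R C H (mul' R H ∘ₗ
          (HopfAlgebra.antipode R ∘ₗ coactCounit δ).rTensor H ∘ₗ δ) (coactCounit δ) := by
        rw [hδ.mul'_comp_rTensor_antipode_coactCounit]
    _ = mul' R H ∘ₗ (HopfAlgebra.antipode R ∘ₗ coactCounit δ).rTensor H ∘ₗ
          comodCondLHS R C H δ (coactCounit δ) := (mul'_comp_rTensor_comp_comodCondLHS δ _ _).symm
    _ = convOne R C H := by
        rw [hδ.comodCondLHS_coactCounit, hδ.mul'_comp_rTensor_antipode_coactCounit]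

lemma IsCoflatCoaction.coactLeft_convOne (hδ : IsCoflatCoaction R C H δ) :
    toConv (coactLeft δ (convOne R C H)) = 1 := by
  have key : (Algebra.linearMap R H ∘ₗ counit (R := R) (A := C)).rTensor H
      = (Algebra.TensorProduct.includeRight : H →ₐ[R] H ⊗[R] H).toLinearMap ∘ₗ
          (TensorProduct.lid R H).toLinearMap ∘ₗ (counit (R := R) (A := C)).rTensor H := by
    ext; simp [Algebra.algebraMap_eq_smul_one, TensorProduct.smul_tmul']
  ext1
  rw [coactLeft, _root_.convOne, key]
  change (Algebra.TensorProduct.includeRight : H →ₐ[R] H ⊗[R] H).toLinearMap ∘ₗ coactCounit δ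
    = Algebra.linearMap R (H ⊗[R] H) ∘ₗ counit
  rw [hδ.coactCounit_eq]
  ext; simp [_root_.convOne, Algebra.algebraMap_eq_smul_one, Algebra.TensorProduct.one_def]

noncomputable def IsCoflatCoaction.coactLeftHom (hδ : IsCoflatCoaction R C H δ) :
    WithConv (C →ₗ[R] H) →+* WithConv (C →ₗ[R] H ⊗[R] H) where
  toFun α := toConv (coactLeft δ α.ofConv)
  map_one' := hδ.coactLeft_convOne
  map_mul' α γ := hδ.coactLeft_conv α.ofConv γ.ofConv
  map_zero' := by ext; simp [coactLeft]
  map_add' α γ := by ext; simp [coactLeft, LinearMap.rTensor_add]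

end CoflatCoaction

/-- for an `H`-equivariant coderivation `φ` one has, for every `n`,
`Δ(φ^{⋆n}(c)) = Σ_{k=0}^{n} (n choose k) φ^{⋆k}(c₍₁₎⁽⁰⁾) ⊗ c₍₁₎⁽¹⁾ φ^{⋆(n-k)}(c₍₂₎)`. -/
theorem coderivation_convPow_comul (R C H : Type) [CommRing R]
    [AddCommGroup C] [Module R C] [Coalgebra R C] [Ring H] [HopfAlgebra R H]
    (δ : C →ₗ[R] C ⊗[R] H) (hδ : IsCoflatCoaction R C H δ)
    (φ : C →ₗ[R] H) (hφ : IsCoderivation R C H δ φ) :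
    ∀ n : ℕ, (Coalgebra.comul (R := R)) ∘ₗ convPow R C H φ n
      = ∑ k ∈ Finset.range (n + 1),
          (n.choose k) • coactTerm R C H δ (convPow R C H φ k) (convPow R C H φ (n - k)) := by
  intro n
  set P := hδ.coactLeftHom
  set Q := (Algebra.TensorProduct.includeRight : H →ₐ[R] H ⊗[R] H).compConvRingHom (C := C)
  have hterm (α β : C →ₗ[R] H) :
      toConv (coactTerm R C H δ α β) = P (toConv α) * Q (toConv β) :=
    toConv_coactTerm δ α β
  have hcomul : (Bialgebra.comulAlgHom R H).compConvRingHom (toConv φ)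
      = P (toConv φ) + Q (toConv φ) := by
    rw [AlgHom.compConvRingHom_apply, Bialgebra.toLinearMap_comulAlgHom, ofConv_toConv,
      hφ.coaction, toConv_add, hterm, hterm, toConv_convOne, map_one, map_one, one_mul, mul_one,
      add_comm]
  have hcomm : Commute (P (toConv φ)) (Q (toConv φ)) :=
    commute_coactLeft_includeRight δ hφ.comodule φ
  apply toConv_injective
  calc toConv (comul ∘ₗ convPow R C H φ n)
      = (Bialgebra.comulAlgHom R H).compConvRingHom (toConv φ ^ n) := by
        rw [← toConv_convPow]; rfl
    _ = (P (toConv φ) + Q (toConv φ)) ^ n := by rw [map_pow, hcomul]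
    _ = ∑ k ∈ Finset.range (n + 1),
          P (toConv φ) ^ k * Q (toConv φ) ^ (n - k) * (n.choose k : WithConv _) := hcomm.add_pow n
    _ = _ := by
        simp only [toConv_sum, toConv_smul, hterm, toConv_convPow, map_pow, nsmul_eq_mul']
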